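/- arXiv:1305.1899 — 4 statements merged into one kernel-verified Lean document; each statement's English description precedes it below -/
import Mathlib

section
/- Suppose n ratings r₁, …, r_n are i.i.d. with values in {1, …, m} and P[r_j = k] = α_k, where ℓ = argmax_k α_k is unique and α̃ denotes the second-largest value among α₁, …, α_m. Let n_k = |{j : r_j = k}| and let the majority label be ℓ̂ = argmax_k n_k. If n ≥ (12·α_ℓ / (α_ℓ − α̃)²) · ln(m/δ), then P[ℓ̂ = ℓ] ≥ 1 − δ. -/
/-!
For a competing label `k`, the difference `N_k - N_ℓ` of rating counts is a sum of `n` i.i.d.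
copies of `1[r = k] - 1[r = ℓ]`. The Chernoff bound at `t = log √(α_ℓ / α_k)` bounds
`P[N_ℓ ≤ N_k]` by `(1 - (√α_ℓ - √α_k)²)ⁿ ≤ exp (-n (α_ℓ - α_k)² / (4 α_ℓ))`, which the sample
size makes at most `δ / m`; a union bound over the other labels finishes the proof.
-/

open MeasureTheory ProbabilityTheory Finset Real

section Categorical

variable {Ω β : Type*} [MeasurableSpace Ω] {P : Measure Ω}
  [Fintype β] [MeasurableSpace β] [MeasurableSingletonClass β]
  {X : Ω → β} {α : β → ℝ}

lemma integral_comp_eq_sum [IsFiniteMeasure P] (hX : Measurable X) (hα : ∀ k, 0 ≤ α k)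
    (hdist : ∀ k, P {ω | X ω = k} = ENNReal.ofReal (α k)) (f : β → ℝ) :
    ∫ ω, f (X ω) ∂P = ∑ k, α k * f k := by
  rw [← integral_map hX.aemeasurable (measurable_of_finite f).aestronglyMeasurable,
    integral_fintype .of_finite]
  refine sum_congr rfl fun k _ => ?_
  rw [measureReal_def, Measure.map_apply hX (measurableSet_singleton k), smul_eq_mul]
  simp only [Set.preimage, Set.mem_singleton_iff, hdist k, ENNReal.toReal_ofReal (hα k)]

lemma mgf_indicator_sub_indicator [DecidableEq β] [IsFiniteMeasure P] (hX : Measurable X)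
    (hα : ∀ k, 0 ≤ α k) (hα_sum : ∑ k, α k = 1)
    (hdist : ∀ k, P {ω | X ω = k} = ENNReal.ofReal (α k)) {k ℓ : β} (hkℓ : k ≠ ℓ) (t : ℝ) :
    mgf (fun ω => (if X ω = k then 1 else 0) - if X ω = ℓ then 1 else 0) P t
      = 1 + α k * (exp t - 1) + α ℓ * (exp (-t) - 1) := by
  have hsplit : ∀ v, α v * exp (t * ((if v = k then 1 else 0) - if v = ℓ then 1 else 0))
      = α v + ((if v = k then α k * (exp t - 1) else 0)
        + if v = ℓ then α ℓ * (exp (-t) - 1) else 0) := by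
    intro v
    by_cases hvk : v = k
    · subst hvk; simp only [↓reduceIte, hkℓ, sub_zero, mul_one, add_zero]; ring
    · by_cases hvℓ : v = ℓ
      · subst hvℓ; simp only [hvk, ↓reduceIte, zero_sub, mul_neg, mul_one, zero_add]; ring
      · simp [hvk, hvℓ]
  rw [mgf, integral_comp_eq_sum hX hα hdist
    (fun v => exp (t * ((if v = k then 1 else 0) - if v = ℓ then 1 else 0)))]
  simp only [hsplit, sum_add_distrib, hα_sum, sum_ite_eq', mem_univ, if_true]
  ring

end Categorical

lemma one_add_mul_exp_log_sqrt_div {a b : ℝ} (ha : 0 < a) (hb : 0 < b) :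
    1 + a * (exp (log (√b / √a)) - 1) + b * (exp (-log (√b / √a)) - 1) = 1 - (√b - √a) ^ 2 := by
  have hsa := sq_sqrt ha.le
  have hsb := sq_sqrt hb.le
  have : 0 < √a := sqrt_pos.2 ha
  have : 0 < √b := sqrt_pos.2 hb
  rw [exp_neg, exp_log (by positivity), inv_div]
  field_simp
  nlinarith

lemma sq_sub_div_le_sq_sqrt_sub_sqrt {a b : ℝ} (ha : 0 ≤ a) (hab : a ≤ b) :
    (b - a) ^ 2 / (4 * b) ≤ (√b - √a) ^ 2 := by
  rcases hab.eq_or_lt with rfl | hab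
  · simp
  have hb : 0 < b := ha.trans_lt hab
  have hsb := sq_sqrt hb.le
  have hsab : √a ≤ √b := sqrt_le_sqrt hab.le
  have hfac : b - a ≤ 2 * √b * (√b - √a) := by nlinarith [sqrt_nonneg a, sq_sqrt ha]
  rw [div_le_iff₀ (by positivity)]
  calc (b - a) ^ 2 ≤ (2 * √b * (√b - √a)) ^ 2 := pow_le_pow_left₀ (by linarith) hfac 2
    _ = (√b - √a) ^ 2 * (4 * b) := by linear_combination 4 * (√b - √a) ^ 2 * hsb

section Counts

variable {Ω β ι : Type*} [MeasurableSpace Ω] {P : Measure Ω} [IsProbabilityMeasure P]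
  [Fintype β] [DecidableEq β] [MeasurableSpace β] [MeasurableSingletonClass β] [Fintype ι]
  {r : ι → Ω → β} {α : β → ℝ}

lemma measureReal_card_le_card_le_mgf_pow (hmeas : ∀ j, Measurable (r j)) (hindep : iIndepFun r P)
    (hα : ∀ k, 0 ≤ α k) (hα_sum : ∑ k, α k = 1)
    (hdist : ∀ j k, P {ω | r j ω = k} = ENNReal.ofReal (α k))
    {k ℓ : β} (hkℓ : k ≠ ℓ) {t : ℝ} (ht : 0 ≤ t) :
    P.real {ω | #{j | r j ω = ℓ} ≤ #{j | r j ω = k}}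
      ≤ (1 + α k * (exp t - 1) + α ℓ * (exp (-t) - 1)) ^ Fintype.card ι := by
  set f : β → ℝ := fun v => (if v = k then 1 else 0) - if v = ℓ then 1 else 0
  have hf : Measurable f := measurable_of_finite f
  have hX_meas : ∀ j, Measurable (f ∘ r j) := fun j => hf.comp (hmeas j)
  have hX_indep : iIndepFun (fun j => f ∘ r j) P := hindep.comp (fun _ => f) fun _ => hf
  have hsum : ∀ ω, (∑ j, f ∘ r j) ω = (#{j | r j ω = k} : ℝ) - #{j | r j ω = ℓ} := by
    intro ω
    simp only [Finset.sum_apply, Function.comp_apply, f, sum_sub_distrib, sum_boole]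
  have hint : ∀ j ∈ (univ : Finset ι), Integrable (fun ω => exp (t * (f ∘ r j) ω)) P :=
    fun j _ => (Integrable.of_finite (f := fun v => exp (t * f v))).comp_measurable (hmeas j)
  have hchernoff := measure_ge_le_exp_mul_mgf 0 ht (hX_indep.integrable_exp_mul_sum hX_meas hint)
  rw [hX_indep.mgf_sum hX_meas, mul_zero, exp_zero, one_mul] at hchernoff
  simp only [hsum, sub_nonneg, Nat.cast_le] at hchernoff
  have hmgf : ∀ j, mgf (f ∘ r j) P t = 1 + α k * (exp t - 1) + α ℓ * (exp (-t) - 1) :=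
    fun j => mgf_indicator_sub_indicator (hmeas j) hα hα_sum (hdist j) hkℓ t
  rwa [Fintype.prod_congr _ _ hmgf, prod_const, card_univ] at hchernoff

lemma measureReal_card_le_card_le_exp (hmeas : ∀ j, Measurable (r j)) (hindep : iIndepFun r P)
    (hα_pos : ∀ k, 0 < α k) (hα_sum : ∑ k, α k = 1)
    (hdist : ∀ j k, P {ω | r j ω = k} = ENNReal.ofReal (α k))
    {k ℓ : β} (hkℓ : k ≠ ℓ) (hαkℓ : α k ≤ α ℓ) :
    P.real {ω | #{j | r j ω = ℓ} ≤ #{j | r j ω = k}}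
      ≤ exp (-(Fintype.card ι * ((α ℓ - α k) ^ 2 / (4 * α ℓ)))) := by
  set n := Fintype.card ι
  set t := log (√(α ℓ) / √(α k))
  have ht : 0 ≤ t := log_nonneg <| (one_le_div (sqrt_pos.2 (hα_pos k))).2 (sqrt_le_sqrt hαkℓ)
  have hmgf := measureReal_card_le_card_le_mgf_pow hmeas hindep (fun k => (hα_pos k).le) hα_sum
    hdist hkℓ ht
  rw [one_add_mul_exp_log_sqrt_div (hα_pos k) (hα_pos ℓ)] at hmgf
  have hM : 0 ≤ 1 - (√(α ℓ) - √(α k)) ^ 2 := by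
    have hαℓ : α ℓ ≤ 1 := hα_sum ▸ single_le_sum (fun k _ => (hα_pos k).le) (mem_univ ℓ)
    have : √(α ℓ) ≤ 1 := sqrt_le_one.2 hαℓ
    have : √(α k) ≤ √(α ℓ) := sqrt_le_sqrt hαkℓ
    nlinarith [sqrt_nonneg (α k)]
  calc _ ≤ (1 - (√(α ℓ) - √(α k)) ^ 2) ^ n := hmgf
    _ ≤ exp (-(√(α ℓ) - √(α k)) ^ 2) ^ n := by
      gcongr
      linarith [add_one_le_exp (-(√(α ℓ) - √(α k)) ^ 2)]
    _ = exp (-(n * (√(α ℓ) - √(α k)) ^ 2)) := by rw [← exp_nat_mul, mul_neg]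
    _ ≤ exp (-(n * ((α ℓ - α k) ^ 2 / (4 * α ℓ)))) := by
      gcongr
      exact sq_sub_div_le_sq_sqrt_sub_sqrt (hα_pos k).le hαkℓ

end Counts

lemma one_sub_card_mul_le_measureReal_forall {Ω β : Type*} [MeasurableSpace Ω] {P : Measure Ω}
    [IsProbabilityMeasure P] [Fintype β] {q : β → Prop} [DecidablePred q] {p : β → Ω → Prop}
    {ε : ℝ} (hε : ∀ k, q k → P.real {ω | ¬ p k ω} ≤ ε) :
    1 - #{k | q k} * ε ≤ P.real {ω | ∀ k, q k → p k ω} := by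
  have hcompl : {ω | ∀ k, q k → p k ω}ᶜ = ⋃ k ∈ ({k | q k} : Finset β), {ω | ¬ p k ω} := by
    ext ω; simp
  have hbad : P.real {ω | ∀ k, q k → p k ω}ᶜ ≤ #{k | q k} * ε := by
    rw [hcompl]
    refine (measureReal_biUnion_finset_le _ _).trans ?_
    simpa using sum_le_sum fun k hk => hε k (mem_filter.1 hk).2
  have hunion := measureReal_union_le (μ := P) {ω | ∀ k, q k → p k ω} {ω | ∀ k, q k → p k ω}ᶜ
  rw [Set.union_compl_self, probReal_univ] at hunion
  linarith

theorem majority_rule_honest_general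
    {Ω : Type*} [MeasurableSpace Ω] (P : Measure Ω) [IsProbabilityMeasure P]
    (m n : ℕ) (α : Fin m → ℝ) (r : Fin n → Ω → Fin m)
    (hmeas : ∀ j, Measurable (r j))
    (hindep : iIndepFun r P)
    (hdist : ∀ j k, P {ω | r j ω = k} = ENNReal.ofReal (α k))
    (hα_pos : ∀ k, 0 < α k) (hα_sum : ∑ k, α k = 1)
    (ℓ : Fin m) (hℓ : ∀ k, k ≠ ℓ → α k < α ℓ)
    (αt : ℝ) (hαt_mem : ∃ k, k ≠ ℓ ∧ α k = αt) (hαt_max : ∀ k, k ≠ ℓ → α k ≤ αt)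
    (δ : ℝ) (hδ0 : 0 < δ) (hδ1 : δ < 1)
    (hn : 12 * α ℓ / (α ℓ - αt) ^ 2 * Real.log (m / δ) ≤ (n : ℝ)) :
    1 - δ ≤ (P {ω | ∀ k, k ≠ ℓ →
      (Finset.univ.filter fun j => r j ω = k).card <
      (Finset.univ.filter fun j => r j ω = ℓ).card}).toReal := by
  have hm : (1 : ℝ) ≤ m := by exact_mod_cast ℓ.pos
  have hgap : 0 < α ℓ - αt := by
    obtain ⟨k, hk, rfl⟩ := hαt_mem
    exact sub_pos.2 (hℓ k hk)
  set L := log (m / δ)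
  have hL : 0 ≤ L := log_nonneg <| (le_div_iff₀ hδ0).2 (by linarith)
  have hbad : ∀ k, k ≠ ℓ → P.real {ω | ¬ #{j | r j ω = k} < #{j | r j ω = ℓ}} ≤ δ / m := by
    intro k hk
    have hexponent : L ≤ n * ((α ℓ - α k) ^ 2 / (4 * α ℓ)) := by
      have hαℓ := hα_pos ℓ
      calc L ≤ 3 * L := by linarith
        _ = 12 * α ℓ / (α ℓ - αt) ^ 2 * L * ((α ℓ - αt) ^ 2 / (4 * α ℓ)) := by
          field_simp; ring
        _ ≤ n * ((α ℓ - αt) ^ 2 / (4 * α ℓ)) := by gcongr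
        _ ≤ n * ((α ℓ - α k) ^ 2 / (4 * α ℓ)) := by gcongr; linarith [hαt_max k hk]
    calc _ = P.real {ω | #{j | r j ω = ℓ} ≤ #{j | r j ω = k}} := by simp only [not_lt]
      _ ≤ exp (-(Fintype.card (Fin n) * ((α ℓ - α k) ^ 2 / (4 * α ℓ)))) :=
        measureReal_card_le_card_le_exp hmeas hindep hα_pos hα_sum hdist hk
          (by linarith [hαt_max k hk])
      _ ≤ exp (-L) := by rw [Fintype.card_fin]; gcongr
      _ = δ / m := by rw [exp_neg, exp_log (by positivity), inv_div]
  have hcard : (#{k | k ≠ ℓ} : ℝ) ≤ m := by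
    exact_mod_cast (card_filter_le _ _).trans_eq (card_fin m)
  calc 1 - δ = 1 - m * (δ / m) := by field_simp
    _ ≤ 1 - #{k | k ≠ ℓ} * (δ / m) := by gcongr
    _ ≤ _ := one_sub_card_mul_le_measureReal_forall hbad

/-- Majority rule under honest rating: with `n` i.i.d. ratings distributed as the
categorical distribution `α` on `{1,…,m}` (encoded as `Fin m`), `ℓ` the unique argmax of
`α` and `αt` the second-largest entry, if `n ≥ (12 α_ℓ / (α_ℓ - α̃)²) ln(m/δ)` then with
probability at least `1 - δ` the label `ℓ` is the strict majority (most frequent) label. -/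
theorem majority_rule_honest
    {Ω : Type*} [MeasurableSpace Ω] (P : Measure Ω) [IsProbabilityMeasure P]
    (m n : ℕ) (hm : 0 < m) (α : Fin m → ℝ) (r : Fin n → Ω → Fin m)
    (hmeas : ∀ j, Measurable (r j))
    (hindep : iIndepFun r P)
    (hdist : ∀ j k, P {ω | r j ω = k} = ENNReal.ofReal (α k))
    (hα_pos : ∀ k, 0 < α k) (hα_sum : ∑ k, α k = 1)
    (ℓ : Fin m) (hℓ : ∀ k, k ≠ ℓ → α k < α ℓ)
    (αt : ℝ) (hαt_mem : ∃ k, k ≠ ℓ ∧ α k = αt) (hαt_max : ∀ k, k ≠ ℓ → α k ≤ αt)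
    (δ : ℝ) (hδ0 : 0 < δ) (hδ1 : δ < 1)
    (hn : 12 * α ℓ / (α ℓ - αt) ^ 2 * Real.log (m / δ) ≤ (n : ℝ)) :
    1 - δ ≤ (P {ω | ∀ k, k ≠ ℓ →
      (Finset.univ.filter fun j => r j ω = k).card <
      (Finset.univ.filter fun j => r j ω = ℓ).card}).toReal :=
  majority_rule_honest_general P m n α r hmeas hindep hdist hα_pos hα_sum ℓ hℓ αt hαt_mem hαt_max δ
    hδ0 hδ1 hn
end

section
/- Under the random-misbehavior mixture model (fraction f < 1 of uniform ratings, remainder categorical with parameters α having unique maximum α_ℓ and second-largest α̃), if the number of ratings satisfies n ≥ 12(f/m + (1−f)α_ℓ) / ((1−f)²(α_ℓ − α̃)²) · ln(m/δ), then the majority label ℓ̂ of the n ratings equals ℓ with probability at least 1 − δ. -/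
/-!
For a wrong label `k`, the count of `k` minus the count of `ℓ` is a sum of `n` independent steps
with values in `{-1, 0, 1}`, each taking `+1` with probability `p_k` and `-1` with probability
`p_ℓ ≥ p_k + Δ`, where `p_k = f/m + (1-f)α_k` and `Δ = (1-f)(α_ℓ - α̃)`. With `e^x ≤ 1 + x + x²`
for `|x| ≤ 1`, the moment generating function of one step at `t = Δ/(4p_ℓ)` is at most
`exp(-Δ²/(8p_ℓ))`, so by the Chernoff bound the count of `k` reaches that of `ℓ` with probability
at most `exp(-nΔ²/(8p_ℓ)) ≤ δ/m`. A union bound over the wrong labels finishes the proof.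
-/

open MeasureTheory ProbabilityTheory Finset

lemma Real.exp_le_one_add_add_sq {x : ℝ} (hx : |x| ≤ 1) : Real.exp x ≤ 1 + x + x ^ 2 := by
  linarith [(abs_le.1 (Real.abs_exp_sub_one_sub_id_le hx)).2]

lemma one_add_exp_sub_one_mul_add_le_exp_neg_sq_div {q p' p Δ : ℝ} (hq : 0 ≤ q) (hΔ : 0 < Δ)
    (hgap : q + Δ ≤ p') (hp' : p' ≤ p) :
    1 + (Real.exp (Δ / (4 * p)) - 1) * q + (Real.exp (-(Δ / (4 * p))) - 1) * p' ≤
      Real.exp (-(Δ ^ 2 / (8 * p))) := by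
  have hp : 0 < p := by linarith
  set t := Δ / (4 * p) with ht
  have ht0 : 0 < t := by positivity
  have ht1 : t ≤ 1 := by rw [ht, div_le_one (by positivity)]; linarith
  have hexp := Real.exp_le_one_add_add_sq (abs_le.2 ⟨by linarith, ht1⟩)
  have hexp_neg := Real.exp_le_one_add_add_sq (x := -t) (abs_le.2 ⟨by linarith, by linarith⟩)
  calc 1 + (Real.exp t - 1) * q + (Real.exp (-t) - 1) * p'
      ≤ 1 + (t + t ^ 2) * q + (-t + t ^ 2) * p' := by gcongr <;> linarith
    _ ≤ 1 + (-t * Δ + 2 * t ^ 2 * p) := by nlinarith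
    _ = -(Δ ^ 2 / (8 * p)) + 1 := by rw [ht]; field_simp; ring
    _ ≤ _ := Real.add_one_le_exp _

section VoteMargin

variable {β Ω : Type*} [DecidableEq β]

def voteMargin (a b y : β) : ℝ := (if y = a then 1 else 0) - (if y = b then 1 else 0)

lemma sum_voteMargin {ι : Type*} [Fintype ι] (a b : β) (v : ι → β) :
    ∑ j, voteMargin a b (v j) = (#{j | v j = a} : ℝ) - #{j | v j = b} := by
  simp only [voteMargin, sum_sub_distrib, sum_boole]

lemma exp_mul_voteMargin_comp {a b : β} (hab : a ≠ b) (t : ℝ) (X : Ω → β) :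
    (fun ω => Real.exp (t * voteMargin a b (X ω))) = fun ω => 1 +
      (Real.exp t - 1) * (X ⁻¹' {a}).indicator 1 ω +
      (Real.exp (-t) - 1) * (X ⁻¹' {b}).indicator 1 ω := by
  ext ω
  by_cases ha : X ω = a <;> by_cases hb : X ω = b
  all_goals simp_all [voteMargin]

variable [MeasurableSpace β] [MeasurableSingletonClass β]

lemma measurable_voteMargin (a b : β) : Measurable (voteMargin a b) :=
  (measurable_const.ite (measurableSet_singleton a) measurable_const).sub
    (measurable_const.ite (measurableSet_singleton b) measurable_const)

variable [MeasurableSpace Ω] {μ : Measure Ω}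

lemma integrable_exp_mul_voteMargin_comp [IsFiniteMeasure μ] {X : Ω → β} (hX : Measurable X)
    {a b : β} (hab : a ≠ b) (t : ℝ) :
    Integrable (fun ω => Real.exp (t * voteMargin a b (X ω))) μ := by
  have hind : ∀ c, Integrable ((X ⁻¹' {c}).indicator 1) μ :=
    fun c => (integrable_const (1 : ℝ)).indicator (hX (measurableSet_singleton c))
  rw [exp_mul_voteMargin_comp hab]
  exact ((integrable_const 1).add ((hind a).const_mul _)).add ((hind b).const_mul _)

lemma mgf_voteMargin_comp [IsProbabilityMeasure μ] {X : Ω → β} (hX : Measurable X)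
    {a b : β} (hab : a ≠ b) (t : ℝ) :
    mgf (fun ω => voteMargin a b (X ω)) μ t = 1 + (Real.exp t - 1) * μ.real (X ⁻¹' {a}) +
      (Real.exp (-t) - 1) * μ.real (X ⁻¹' {b}) := by
  have hind : ∀ c, Integrable ((X ⁻¹' {c}).indicator 1) μ :=
    fun c => (integrable_const (1 : ℝ)).indicator (hX (measurableSet_singleton c))
  rw [mgf, exp_mul_voteMargin_comp hab, integral_add, integral_add, integral_const_mul,
    integral_const_mul, integral_indicator_one (hX (measurableSet_singleton a)),
    integral_indicator_one (hX (measurableSet_singleton b))]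
  · simp
  · exact integrable_const 1
  · exact (hind a).const_mul _
  · exact (integrable_const 1).add ((hind a).const_mul _)
  · exact (hind b).const_mul _

lemma measureReal_count_le_count_le_exp [IsProbabilityMeasure μ] {ι : Type*} [Fintype ι]
    {r : ι → Ω → β} (hr : ∀ j, Measurable (r j)) (hindep : iIndepFun r μ)
    {a b : β} (hab : a ≠ b) {Δ p : ℝ} (hΔ : 0 < Δ)
    (hgap : ∀ j, μ.real (r j ⁻¹' {a}) + Δ ≤ μ.real (r j ⁻¹' {b}))
    (hp : ∀ j, μ.real (r j ⁻¹' {b}) ≤ p) :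
    μ.real {ω | #{j | r j ω = b} ≤ #{j | r j ω = a}} ≤
      Real.exp (-(Fintype.card ι * (Δ ^ 2 / (8 * p)))) := by
  rcases isEmpty_or_nonempty ι with hι | ⟨⟨j₀⟩⟩
  · simp
  have hp0 : 0 < p := by
    linarith [measureReal_nonneg (μ := μ) (s := r j₀ ⁻¹' {a}), hgap j₀, hp j₀]
  set t := Δ / (4 * p)
  set X : ι → Ω → ℝ := fun j ω => voteMargin a b (r j ω)
  have hX : ∀ j, Measurable (X j) := fun j => (measurable_voteMargin a b).comp (hr j)
  have hindepX : iIndepFun X μ :=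
    hindep.comp (fun _ => voteMargin a b) fun _ => measurable_voteMargin a b
  have hset : {ω | #{j | r j ω = b} ≤ #{j | r j ω = a}} = {ω | 0 ≤ (∑ j, X j) ω} := by
    ext ω
    simp only [Set.mem_ofPred_eq, Finset.sum_apply, X, sum_voteMargin, sub_nonneg, Nat.cast_le]
  have hmgf : ∀ j, mgf (X j) μ t ≤ Real.exp (-(Δ ^ 2 / (8 * p))) := fun j => by
    rw [mgf_voteMargin_comp (hr j) hab]
    exact one_add_exp_sub_one_mul_add_le_exp_neg_sq_div measureReal_nonneg hΔ (hgap j) (hp j)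
  have hchernoff := measure_ge_le_exp_mul_mgf (μ := μ) 0 (by positivity : 0 ≤ t)
    (hindepX.integrable_exp_mul_sum hX (s := univ) fun j _ =>
      integrable_exp_mul_voteMargin_comp (hr j) hab t)
  rw [hset]
  calc μ.real {ω | 0 ≤ (∑ j, X j) ω} ≤ ∏ j, mgf (X j) μ t := by
        simpa [hindepX.mgf_sum hX] using hchernoff
    _ ≤ ∏ _j : ι, Real.exp (-(Δ ^ 2 / (8 * p))) :=
        prod_le_prod (fun _ _ => mgf_nonneg) fun j _ => hmgf j
    _ = _ := by rw [prod_const, card_univ, ← Real.exp_nat_mul, mul_neg]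

end VoteMargin

lemma one_sub_card_mul_le_measureReal_plurality {Ω β ι : Type*} [MeasurableSpace Ω]
    {μ : Measure Ω} [IsProbabilityMeasure μ] [Fintype β] [DecidableEq β] [Fintype ι]
    {r : ι → Ω → β} {ℓ : β} {ε : ℝ} (hε : 0 ≤ ε)
    (hbad : ∀ k, k ≠ ℓ → μ.real {ω | #{j | r j ω = ℓ} ≤ #{j | r j ω = k}} ≤ ε) :
    1 - Fintype.card β * ε ≤ μ.real {ω | ∀ k, k ≠ ℓ → #{j | r j ω = k} < #{j | r j ω = ℓ}} := by
  set G := {ω | ∀ k, k ≠ ℓ → #{j | r j ω = k} < #{j | r j ω = ℓ}}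
  have hGc : Gᶜ = ⋃ k ∈ univ.erase ℓ, {ω | #{j | r j ω = ℓ} ≤ #{j | r j ω = k}} := by
    ext ω
    simp [G]
  have hunion : 1 ≤ μ.real G + μ.real Gᶜ := by
    simpa using measureReal_union_le (μ := μ) G Gᶜ
  have hGc_le : μ.real Gᶜ ≤ Fintype.card β * ε := calc
    μ.real Gᶜ ≤ ∑ k ∈ univ.erase ℓ, μ.real {ω | #{j | r j ω = ℓ} ≤ #{j | r j ω = k}} :=
        hGc ▸ measureReal_biUnion_finset_le _ _
    _ ≤ ∑ _k ∈ univ.erase ℓ, ε := sum_le_sum fun k hk => hbad k (ne_of_mem_erase hk)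
    _ ≤ ∑ _k : β, ε := sum_le_sum_of_subset_of_nonneg (erase_subset ℓ univ) fun _ _ _ => hε
    _ = Fintype.card β * ε := by rw [sum_const, card_univ, nsmul_eq_mul]
  linarith

lemma exp_neg_mul_sq_div_le_inv {n p Δ x : ℝ} (hx : 1 ≤ x) (hp : 0 < p) (hΔ : 0 < Δ)
    (hn : 12 * p / Δ ^ 2 * Real.log x ≤ n) :
    Real.exp (-(n * (Δ ^ 2 / (8 * p)))) ≤ x⁻¹ := by
  have hlog : 0 ≤ Real.log x := Real.log_nonneg hx
  have hlog_le : Real.log x ≤ n * (Δ ^ 2 / (8 * p)) := by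
    rw [div_mul_eq_mul_div, div_le_iff₀ (by positivity)] at hn
    rw [mul_div_assoc', le_div_iff₀ (by positivity)]
    nlinarith
  calc Real.exp (-(n * (Δ ^ 2 / (8 * p)))) ≤ Real.exp (-Real.log x) := by gcongr
    _ = x⁻¹ := by rw [Real.exp_neg, Real.exp_log (by linarith)]

theorem majority_rule_resists_random_misbehavior_general
    {Ω : Type*} [MeasurableSpace Ω] (P : Measure Ω) [IsProbabilityMeasure P]
    (m n : ℕ) (α : Fin m → ℝ) (r : Fin n → Ω → Fin m)
    (hmeas : ∀ j, Measurable (r j))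
    (hindep : iIndepFun r P)
    (f : ℝ) (hf0 : 0 ≤ f) (hf1 : f < 1)
    (hdist : ∀ j k, P {ω | r j ω = k} = ENNReal.ofReal (f / m + (1 - f) * α k))
    (hα_pos : ∀ k, 0 < α k)
    (ℓ : Fin m) (hℓ : ∀ k, k ≠ ℓ → α k < α ℓ)
    (αt : ℝ) (hαt_mem : ∃ k, k ≠ ℓ ∧ α k = αt) (hαt_max : ∀ k, k ≠ ℓ → α k ≤ αt)
    (δ : ℝ) (hδ0 : 0 < δ) (hδ1 : δ < 1)
    (hn : 12 * (f / m + (1 - f) * α ℓ) / ((1 - f) ^ 2 * (α ℓ - αt) ^ 2) *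
        Real.log (m / δ) ≤ (n : ℝ)) :
    1 - δ ≤ (P {ω | ∀ k, k ≠ ℓ →
      (Finset.univ.filter fun j => r j ω = k).card <
      (Finset.univ.filter fun j => r j ω = ℓ).card}).toReal := by
  set p : Fin m → ℝ := fun k => f / m + (1 - f) * α k
  obtain ⟨k₀, hk₀, rfl⟩ := hαt_mem
  set Δ := (1 - f) * (α ℓ - α k₀)
  have hm : (1 : ℝ) ≤ m := by exact_mod_cast ℓ.pos
  have hp_pos : ∀ k, 0 < p k := fun k => by
    have := mul_pos (sub_pos.2 hf1) (hα_pos k)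
    positivity
  have hprob : ∀ j k, P.real (r j ⁻¹' {k}) = p k := fun j k => by
    change (P {ω | r j ω = k}).toReal = p k
    rw [hdist, ENNReal.toReal_ofReal (hp_pos k).le]
  have hΔ : 0 < Δ := mul_pos (sub_pos.2 hf1) (sub_pos.2 (hℓ k₀ hk₀))
  have hgap : ∀ k, k ≠ ℓ → p k + Δ ≤ p ℓ := fun k hk => by
    have := mul_le_mul_of_nonneg_left (hαt_max k hk) (sub_pos.2 hf1).le
    simp only [p, Δ]
    linarith
  have hbad : ∀ k, k ≠ ℓ → P.real {ω | #{j | r j ω = ℓ} ≤ #{j | r j ω = k}} ≤ δ / m := by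
    intro k hk
    refine (measureReal_count_le_count_le_exp hmeas hindep hk hΔ
      (fun j => ?_) (fun j => (hprob j ℓ).le)).trans ?_
    · simpa only [hprob] using hgap k hk
    · simpa only [Fintype.card_fin, inv_div] using exp_neg_mul_sq_div_le_inv
        ((one_le_div hδ0).2 (hδ1.le.trans hm)) (hp_pos ℓ) hΔ
        (by simpa only [Δ, mul_pow] using hn)
  have hplurality := one_sub_card_mul_le_measureReal_plurality (by positivity) hbad
  rwa [Fintype.card_fin, mul_div_cancel₀ _ (zero_lt_one.trans_le hm).ne'] at hplurality

/-- Majority rule resists random misbehavior: with `n` i.i.d. ratings each distributed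
as the mixture `k ↦ f/m + (1-f)α_k` (fraction `f < 1` uniform, remainder categorical `α`
with unique argmax `ℓ` and second-largest entry `αt`), if
`n ≥ 12(f/m + (1-f)α_ℓ)/((1-f)²(α_ℓ - α̃)²) · ln(m/δ)` then with probability at least
`1 - δ` the label `ℓ` is the strict majority label of the `n` ratings. -/
theorem majority_rule_resists_random_misbehavior
    {Ω : Type*} [MeasurableSpace Ω] (P : Measure Ω) [IsProbabilityMeasure P]
    (m n : ℕ) (hm : 0 < m) (α : Fin m → ℝ) (r : Fin n → Ω → Fin m)
    (hmeas : ∀ j, Measurable (r j))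
    (hindep : iIndepFun r P)
    (f : ℝ) (hf0 : 0 ≤ f) (hf1 : f < 1)
    (hdist : ∀ j k, P {ω | r j ω = k} = ENNReal.ofReal (f / m + (1 - f) * α k))
    (hα_pos : ∀ k, 0 < α k) (hα_sum : ∑ k, α k = 1)
    (ℓ : Fin m) (hℓ : ∀ k, k ≠ ℓ → α k < α ℓ)
    (αt : ℝ) (hαt_mem : ∃ k, k ≠ ℓ ∧ α k = αt) (hαt_max : ∀ k, k ≠ ℓ → α k ≤ αt)
    (δ : ℝ) (hδ0 : 0 < δ) (hδ1 : δ < 1)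
    (hn : 12 * (f / m + (1 - f) * α ℓ) / ((1 - f) ^ 2 * (α ℓ - αt) ^ 2) *
        Real.log (m / δ) ≤ (n : ℝ)) :
    1 - δ ≤ (P {ω | ∀ k, k ≠ ℓ →
      (Finset.univ.filter fun j => r j ω = k).card <
      (Finset.univ.filter fun j => r j ω = ℓ).card}).toReal :=
  majority_rule_resists_random_misbehavior_general P m n α r hmeas hindep f hf0 hf1 hdist hα_pos ℓ
    hℓ αt hαt_mem hαt_max δ hδ0 hδ1 hn
end

section
/- Let r₁, …, r_n be i.i.d. ratings on {1,…,m} with distribution α and mean γ = Σ_k k·α_k, and let r̂ = (1/n)Σ_j r_j be the empirical average. For any ε > 0 and 0 < δ < 1, if n ≥ (3/ε²)·ln(2m/δ), then with probability at least 1 − δ, |r̂ − γ| ≤ ε·√(m·γ) + m·ε². -/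
/-!
Centre the rating values: `Z j = r j - γ` are independent, have mean zero, satisfy `|Z j| ≤ m`, and by
the Bhatia–Davis inequality have variance at most `(m - γ)(γ - 1) ≤ m γ`. Since
`exp u ≤ 1 + u + 13/18 u²` for `|u| ≤ 1`, the Chernoff method gives the Bernstein-type tail
`P(∑ Z j ≥ n t) ≤ exp (-(n t² / (2 m t + 26/9 m γ)))`, and likewise for `-Z`. For
`t = ε √(m γ) + m ε²` one has `t² ≥ ε² m γ + m ε² t`: the first part pays for the variance
term and the second for the range term, so each tail is at most `δ / 2` once
`n ε² ≥ 3 log (2 m / δ)`.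
-/

open MeasureTheory ProbabilityTheory Finset Real

namespace Real

lemma exp_le_one_add_add_mul_sq {u : ℝ} (hu : |u| ≤ 1) : exp u ≤ 1 + u + 13 / 18 * u ^ 2 := by
  -- third-order Taylor bound: the remainder is at most `2/9 |u|³ ≤ 2/9 u²`, and `1/2 + 2/9 = 13/18`
  have h := (abs_sub_le_iff.1 (exp_bound hu (n := 3) (by norm_num))).1
  norm_num [sum_range_succ, Nat.factorial] at h
  have hcube : |u| ^ 3 ≤ u ^ 2 := by
    rw [pow_succ, ← sq_abs u]
    exact mul_le_of_le_one_right (by positivity) hu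
  nlinarith

end Real

section Bernstein

variable {Ω : Type*} [MeasurableSpace Ω] {P : Measure Ω} [IsProbabilityMeasure P]

lemma mgf_le_exp_of_abs_le {X : Ω → ℝ} {b V s : ℝ} (hX : AEMeasurable X P)
    (hb : ∀ᵐ ω ∂P, |X ω| ≤ b) (hmean : P[X] = 0) (hvar : Var[X; P] ≤ V) (hs : 0 ≤ s)
    (hsb : s * b ≤ 1) :
    mgf X P s ≤ exp (13 / 18 * s ^ 2 * V) := by
  have hX_int : Integrable X P := .of_bound hX.aestronglyMeasurable b (by simpa using hb)
  have hX2_int : Integrable (fun ω => X ω ^ 2) P :=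
    .of_bound (by fun_prop) (b ^ 2) (hb.mono fun ω h => by
      simpa [sq_abs] using pow_le_pow_left₀ (abs_nonneg _) h 2)
  calc mgf X P s ≤ ∫ ω, 1 + s * X ω + 13 / 18 * s ^ 2 * X ω ^ 2 ∂P := by
        refine integral_mono_ae (integrable_exp_mul_of_le s b hs hX
          (hb.mono fun ω h => (le_abs_self _).trans h)) (by fun_prop) (hb.mono fun ω h => ?_)
        have hsX : |s * X ω| ≤ 1 := by
          rw [abs_mul, abs_of_nonneg hs]
          exact (mul_le_mul_of_nonneg_left h hs).trans hsb
        linarith [exp_le_one_add_add_mul_sq hsX, mul_pow s (X ω) 2]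
    _ = 1 + 13 / 18 * s ^ 2 * Var[X; P] := by
        rw [integral_add (by fun_prop) (by fun_prop), integral_add (by fun_prop) (by fun_prop),
          integral_const_mul, integral_const_mul, variance_of_integral_eq_zero hX hmean, hmean]
        simp
    _ ≤ 1 + 13 / 18 * s ^ 2 * V := by gcongr
    _ ≤ exp (13 / 18 * s ^ 2 * V) := by linarith [add_one_le_exp (13 / 18 * s ^ 2 * V)]

variable {ι : Type*} [Fintype ι] {Z : ι → Ω → ℝ} {b V : ℝ}

lemma measureReal_sum_ge_le_exp_of_abs_le (hZ : ∀ i, Measurable (Z i))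
    (hindep : iIndepFun Z P) (hb : ∀ i, ∀ᵐ ω ∂P, |Z i ω| ≤ b) (hmean : ∀ i, P[Z i] = 0)
    (hvar : ∀ i, Var[Z i; P] ≤ V) {s : ℝ} (hs : 0 ≤ s) (hsb : s * b ≤ 1) (t : ℝ) :
    P.real {ω | Fintype.card ι * t ≤ ∑ i, Z i ω}
      ≤ exp (Fintype.card ι * (13 / 18 * s ^ 2 * V - s * t)) := by
  have hint : Integrable (fun ω => exp (s * ∑ i, Z i ω)) P := by
    simpa using hindep.integrable_exp_mul_sum hZ (s := univ) fun i _ =>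
      integrable_exp_mul_of_le s b hs (hZ i).aemeasurable
        ((hb i).mono fun ω h => (le_abs_self _).trans h)
  calc P.real {ω | Fintype.card ι * t ≤ ∑ i, Z i ω}
      ≤ exp (-s * (Fintype.card ι * t)) * mgf (fun ω => ∑ i, Z i ω) P s :=
        measure_ge_le_exp_mul_mgf _ hs hint
    _ = exp (-s * (Fintype.card ι * t)) * ∏ i, mgf (Z i) P s := by
        rw [← hindep.mgf_sum hZ, sum_fn]
    _ ≤ exp (-s * (Fintype.card ι * t)) * ∏ _i : ι, exp (13 / 18 * s ^ 2 * V) := by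
        gcongr with i
        · exact fun i _ => mgf_nonneg
        · exact mgf_le_exp_of_abs_le (hZ i).aemeasurable (hb i) (hmean i) (hvar i) hs hsb
    _ = exp (Fintype.card ι * (13 / 18 * s ^ 2 * V - s * t)) := by
        rw [prod_const, ← exp_nat_mul, ← exp_add, card_univ]
        ring_nf

theorem measureReal_sum_ge_le_bernstein (hZ : ∀ i, Measurable (Z i)) (hindep : iIndepFun Z P)
    (hb : ∀ i, ∀ᵐ ω ∂P, |Z i ω| ≤ b) (hmean : ∀ i, P[Z i] = 0) (hvar : ∀ i, Var[Z i; P] ≤ V)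
    (hb0 : 0 ≤ b) (hV : 0 ≤ V) {t : ℝ} (ht : 0 ≤ t) :
    P.real {ω | Fintype.card ι * t ≤ ∑ i, Z i ω}
      ≤ exp (-(Fintype.card ι * t ^ 2 / (2 * b * t + 26 / 9 * V))) := by
  set D := 2 * b * t + 26 / 9 * V with hD_def
  rcases (show 0 ≤ D by positivity).eq_or_lt with hD | hD
  · rw [← hD, div_zero, neg_zero, exp_zero]
    exact measureReal_le_one
  -- `s = 2 t / D` minimises `13/18 s² V' - s t` for `V' = V + 9/13 b t`; enlarging `V` to `V'`
  -- is what forces `s b ≤ 1`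
  have hsb : 2 * t / D * b ≤ 1 := by
    rw [div_mul_eq_mul_div, div_le_one hD]
    nlinarith [hD_def]
  refine (measureReal_sum_ge_le_exp_of_abs_le hZ hindep hb hmean hvar (by positivity) hsb
    t).trans ?_
  gcongr
  have hexponent : 13 / 18 * (2 * t / D) ^ 2 * V - 2 * t / D * t
      = -(t ^ 2 / D) - 2 * b * t ^ 3 / D ^ 2 := by
    field_simp
    ring
  calc _ ≤ (Fintype.card ι : ℝ) * -(t ^ 2 / D) := by
        rw [hexponent]
        exact mul_le_mul_of_nonneg_left (sub_le_self _ (by positivity)) (by positivity)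
    _ = _ := by ring

theorem one_sub_two_mul_exp_le_measureReal_abs_sum_le (hZ : ∀ i, Measurable (Z i))
    (hindep : iIndepFun Z P) (hb : ∀ i, ∀ᵐ ω ∂P, |Z i ω| ≤ b) (hmean : ∀ i, P[Z i] = 0)
    (hvar : ∀ i, Var[Z i; P] ≤ V) (hb0 : 0 ≤ b) (hV : 0 ≤ V) {t : ℝ} (ht : 0 ≤ t) :
    1 - 2 * exp (-(Fintype.card ι * t ^ 2 / (2 * b * t + 26 / 9 * V)))
      ≤ P.real {ω | |∑ i, Z i ω| ≤ Fintype.card ι * t} := by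
  have hupper := measureReal_sum_ge_le_bernstein hZ hindep hb hmean hvar hb0 hV ht
  have hlower := measureReal_sum_ge_le_bernstein (Z := fun i ω => -Z i ω)
    (fun i => (hZ i).neg) (hindep.comp (fun _ x => -x) fun _ => measurable_neg)
    (fun i => by simpa using hb i) (fun i => by simp [integral_neg, hmean i])
    (fun i => by simpa [variance_fun_neg] using hvar i) hb0 hV ht
  have hcover : Set.univ ⊆ {ω | |∑ i, Z i ω| ≤ Fintype.card ι * t} ∪
      ({ω | Fintype.card ι * t ≤ ∑ i, Z i ω} ∪ {ω | Fintype.card ι * t ≤ ∑ i, -Z i ω}) := by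
    intro ω _
    simp only [Set.mem_union, Set.mem_ofPred_eq, sum_neg_distrib]
    rcases le_or_gt |∑ i, Z i ω| (Fintype.card ι * t) with h | h
    · exact .inl h
    · exact .inr ((lt_abs.1 h).imp le_of_lt le_of_lt)
  have hunion := (measureReal_mono (μ := P) hcover).trans <|
    (measureReal_union_le _ _).trans (add_le_add_right (measureReal_union_le _ _) _)
  rw [probReal_univ] at hunion
  linarith

theorem one_sub_two_mul_exp_le_measureReal_abs_average_sub_le [Nonempty ι] {X : ι → Ω → ℝ}
    {μ : ℝ} (hX : ∀ i, Measurable (X i)) (hindep : iIndepFun X P)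
    (hb : ∀ i, ∀ᵐ ω ∂P, |X i ω - μ| ≤ b) (hmean : ∀ i, P[X i] = μ) (hvar : ∀ i, Var[X i; P] ≤ V)
    (hb0 : 0 ≤ b) (hV : 0 ≤ V) {t : ℝ} (ht : 0 ≤ t) :
    1 - 2 * exp (-(Fintype.card ι * t ^ 2 / (2 * b * t + 26 / 9 * V)))
      ≤ P.real {ω | |(∑ i, X i ω) / Fintype.card ι - μ| ≤ t} := by
  have hX_int (i : ι) : Integrable (X i) P :=
    .of_bound (hX i).aestronglyMeasurable (|μ| + b) ((hb i).mono fun ω h => by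
      rw [norm_eq_abs]
      linarith [abs_sub_abs_le_abs_sub (X i ω) μ])
  have hcard : (0 : ℝ) < Fintype.card ι := Nat.cast_pos.2 Fintype.card_pos
  convert one_sub_two_mul_exp_le_measureReal_abs_sum_le (Z := fun i ω => X i ω - μ)
    (fun i => (hX i).sub_const μ) (hindep.comp (fun _ x => x - μ) fun _ => measurable_sub_const μ)
    hb (fun i => by simp [integral_sub (hX_int i) (integrable_const μ), hmean i])
    (fun i => (variance_sub_const (hX i).aestronglyMeasurable μ).trans_le (hvar i)) hb0 hV ht
    using 3
  ext ω
  have hcentre : (∑ i, X i ω) / Fintype.card ι - μ = (∑ i, (X i ω - μ)) / Fintype.card ι := by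
    rw [sum_sub_distrib, sum_const, card_univ, nsmul_eq_mul]
    field_simp
  rw [hcentre, abs_div, abs_of_pos hcard, div_le_iff₀ hcard, mul_comm]

end Bernstein

lemma integral_comp_eq_sum_mul_of_measure_eq {Ω S : Type*} [MeasurableSpace Ω] {P : Measure Ω}
    [IsFiniteMeasure P] [Fintype S] [MeasurableSpace S] [MeasurableSingletonClass S]
    {ρ : Ω → S} (hρ : Measurable ρ) {α : S → ℝ} (hα : ∀ k, 0 ≤ α k)
    (hdist : ∀ k, P {ω | ρ ω = k} = ENNReal.ofReal (α k)) (g : S → ℝ) :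
    ∫ ω, g (ρ ω) ∂P = ∑ k, g k * α k := by
  rw [← integral_map hρ.aemeasurable (measurable_of_countable g).aestronglyMeasurable,
    integral_fintype .of_finite]
  refine sum_congr rfl fun k _ => ?_
  rw [map_measureReal_apply hρ (measurableSet_singleton k), smul_eq_mul, mul_comm,
    measureReal_def]
  simp [Set.preimage, hdist, hα]

lemma two_mul_exp_neg_le_of_three_div_sq_mul_log_le {m n γ ε δ t : ℝ} (hm : 1 ≤ m)
    (hγ : 0 ≤ γ) (hε : 0 < ε) (hδ0 : 0 < δ) (hδ2 : δ ≤ 2)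
    (hn : 3 / ε ^ 2 * log (2 * m / δ) ≤ n) (ht : t = ε * √(m * γ) + m * ε ^ 2) :
    2 * exp (-(n * t ^ 2 / (2 * m * t + 26 / 9 * (m * γ)))) ≤ δ := by
  set L := log (2 / δ)
  have hL : 0 ≤ L := log_nonneg (by rw [le_div_iff₀ hδ0]; linarith)
  have hLm : L ≤ log (2 * m / δ) := log_le_log (by positivity) (by gcongr; linarith)
  have hnε : 3 * L ≤ n * ε ^ 2 := by
    rw [div_mul_eq_mul_div, div_le_iff₀ (by positivity)] at hn
    linarith
  have hn_nonneg : 0 ≤ n := (mul_nonneg_iff_of_pos_right (pow_pos hε 2)).1 (by linarith)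
  set a := ε * √(m * γ)
  have ha2 : a ^ 2 = ε ^ 2 * (m * γ) := by rw [mul_pow, sq_sqrt (by positivity)]
  have ht0 : 0 < t := by rw [ht]; positivity
  have hsplit : a ^ 2 + m * ε ^ 2 * t ≤ t ^ 2 := by
    rw [ht]
    nlinarith [mul_nonneg (by positivity : 0 ≤ a) (by positivity : 0 ≤ m * ε ^ 2)]
  have hkey : L * (2 * m * t + 26 / 9 * (m * γ)) ≤ n * t ^ 2 := by
    have hexpand : n * (a ^ 2 + m * ε ^ 2 * t) = n * ε ^ 2 * (m * γ) + n * ε ^ 2 * (m * t) := by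
      rw [ha2]
      ring
    linarith [mul_le_mul_of_nonneg_left hsplit hn_nonneg,
      mul_le_mul_of_nonneg_right hnε (by positivity : 0 ≤ m * γ),
      mul_le_mul_of_nonneg_right hnε (by positivity : 0 ≤ m * t),
      mul_nonneg hL (by positivity : 0 ≤ m * γ), mul_nonneg hL (by positivity : 0 ≤ m * t)]
  calc 2 * exp (-(n * t ^ 2 / (2 * m * t + 26 / 9 * (m * γ)))) ≤ 2 * exp (-L) := by
        gcongr
        rwa [le_div_iff₀ (by positivity)]
    _ = δ := by
        rw [exp_neg, exp_log (by positivity)]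
        field_simp

theorem average_scoring_honest_general
    {Ω : Type*} [MeasurableSpace Ω] (P : Measure Ω) [IsProbabilityMeasure P]
    (m n : ℕ) (hm : 0 < m) (hn0 : 0 < n) (α : Fin m → ℝ) (r : Fin n → Ω → Fin m)
    (hmeas : ∀ j, Measurable (r j))
    (hindep : iIndepFun r P)
    (hdist : ∀ j k, P {ω | r j ω = k} = ENNReal.ofReal (α k))
    (hα_nonneg : ∀ k, 0 ≤ α k)
    (γ : ℝ) (hγ : γ = ∑ k : Fin m, ((k : ℕ) + 1 : ℝ) * α k)
    (ε δ : ℝ) (hε : 0 < ε) (hδ0 : 0 < δ) (hδ1 : δ < 1)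
    (hn : 3 / ε ^ 2 * Real.log (2 * m / δ) ≤ (n : ℝ)) :
    1 - δ ≤ (P {ω |
      |(∑ j, ((r j ω : ℕ) + 1 : ℝ)) / n - γ| ≤
        ε * Real.sqrt (m * γ) + m * ε ^ 2}).toReal := by
  set X : Fin n → Ω → ℝ := fun j => (fun k : Fin m => ((k : ℕ) : ℝ) + 1) ∘ r j
  have hX_meas (j : Fin n) : Measurable (X j) := (measurable_of_countable _).comp (hmeas j)
  have hX_mem (j : Fin n) (ω : Ω) : X j ω ∈ Set.Icc (1 : ℝ) m :=
    ⟨by simp [X], by simpa [X] using Nat.cast_le.2 (r j ω).isLt⟩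
  have hX_mean (j : Fin n) : P[X j] = γ :=
    hγ ▸ integral_comp_eq_sum_mul_of_measure_eq (hmeas j) hα_nonneg (hdist j) fun k => (k : ℕ) + 1
  have hγ_mem : γ ∈ Set.Icc (1 : ℝ) m := hX_mean ⟨0, hn0⟩ ▸
    (convex_Icc _ _).integral_mem isClosed_Icc (ae_of_all _ (hX_mem _))
      (.of_mem_Icc 1 m (hX_meas _).aemeasurable (ae_of_all _ (hX_mem _)))
  have hX_dev (j : Fin n) (ω : Ω) : |X j ω - γ| ≤ m :=
    (abs_sub_le_of_le_of_le (hX_mem j ω).1 (hX_mem j ω).2 hγ_mem.1 hγ_mem.2).trans (by simp)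
  have hX_var (j : Fin n) : Var[X j; P] ≤ m * γ := by
    refine (variance_le_sub_mul_sub (ae_of_all _ (hX_mem j)) (hX_meas j).aemeasurable).trans ?_
    nlinarith [hX_mean j, hγ_mem.1]
  have hγ_nonneg : 0 ≤ γ := zero_le_one.trans hγ_mem.1
  have := Fin.pos_iff_nonempty.1 hn0
  have hbernstein := one_sub_two_mul_exp_le_measureReal_abs_average_sub_le hX_meas
    (hindep.comp _ fun _ => measurable_of_countable _) (fun j => ae_of_all _ (hX_dev j)) hX_mean
    hX_var (Nat.cast_nonneg m) (by positivity) (t := ε * √(m * γ) + m * ε ^ 2) (by positivity)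
  have htail := two_mul_exp_neg_le_of_three_div_sq_mul_log_le (Nat.one_le_cast.2 hm)
    hγ_nonneg hε hδ0 (hδ1.le.trans one_le_two) hn rfl
  rw [Fintype.card_fin] at hbernstein
  exact le_trans (by linarith) hbernstein

/-- Average scoring rule, honest case: with `n` i.i.d. categorical ratings on `{1,…,m}`
(encoded as `Fin m`, index `k` standing for value `k+1`), mean `γ = ∑_k (k+1)α_k` and
empirical average `r̂ = (1/n)∑_j r_j`, if `n ≥ (3/ε²)·ln(2m/δ)` then with probability at
least `1 - δ`, `|r̂ - γ| ≤ ε√(mγ) + mε²`. -/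
theorem average_scoring_honest
    {Ω : Type*} [MeasurableSpace Ω] (P : Measure Ω) [IsProbabilityMeasure P]
    (m n : ℕ) (hm : 0 < m) (hn0 : 0 < n) (α : Fin m → ℝ) (r : Fin n → Ω → Fin m)
    (hmeas : ∀ j, Measurable (r j))
    (hindep : iIndepFun r P)
    (hdist : ∀ j k, P {ω | r j ω = k} = ENNReal.ofReal (α k))
    (hα_nonneg : ∀ k, 0 ≤ α k) (hα_sum : ∑ k, α k = 1)
    (γ : ℝ) (hγ : γ = ∑ k : Fin m, ((k : ℕ) + 1 : ℝ) * α k)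
    (ε δ : ℝ) (hε : 0 < ε) (hδ0 : 0 < δ) (hδ1 : δ < 1)
    (hn : 3 / ε ^ 2 * Real.log (2 * m / δ) ≤ (n : ℝ)) :
    1 - δ ≤ (P {ω |
      |(∑ j, ((r j ω : ℕ) + 1 : ℝ)) / n - γ| ≤
        ε * Real.sqrt (m * γ) + m * ε ^ 2}).toReal :=
  average_scoring_honest_general P m n hm hn0 α r hmeas hindep hdist hα_nonneg γ hγ ε δ hε hδ0 hδ1
    hn
end

section
/- Under the random-misbehavior mixture for the average scoring rule, where each rating is uniform on {1,…,m} with probability f and categorical with parameters α (mean γ) otherwise, the mean of the mixed rating distribution is (1−f)γ + f·(m+1)/2. Hence if n ≥ (3/ε²)ln(2m/δ), then with probability at least 1−δ the empirical average r̂ satisfies |r̂ − γ| ≤ ε√(m·((1−f)γ + f(m+1)/2)) + mε² + f·|(m+1)/2 − γ|, by combining the honest-case concentration bound applied to the mixed distribution with the triangle inequality. -/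
open MeasureTheory ProbabilityTheory Finset Real

lemma asrm_gauss (m : ℕ) : ∑ k : Fin m, ((k : ℕ) + 1 : ℝ) = m * (m + 1) / 2 := by
  induction m with
  | zero => simp
  | succ n ih =>
    rw [Fin.sum_univ_castSucc]
    simp only [Fin.coe_castSucc, Fin.val_last] at *
    rw [ih]; push_cast; ring

lemma asrm_exp_bound {x : ℝ} (hx : |x| ≤ 1) : Real.exp x ≤ 1 + x + (3/4) * x ^ 2 := by
  have h := Real.exp_bound hx (n := 2) (by norm_num)
  have h2 : (∑ m ∈ range 2, x ^ m / m.factorial) = 1 + x := by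
    simp [Finset.sum_range_succ]
  rw [h2] at h
  have h3 := (abs_sub_le_iff.1 h).1
  have habs : |x| ^ 2 = x ^ 2 := sq_abs x
  have hc : ((Nat.succ 2 : ℕ) : ℝ) / ((Nat.factorial 2 : ℕ) * (2:ℕ)) = 3/4 := by
    norm_num [Nat.factorial]
  rw [habs, hc] at h3
  linarith

lemma asrm_integral_comp {Ω : Type*} [MeasurableSpace Ω] (P : Measure Ω)
    [IsProbabilityMeasure P] {m : ℕ} (Y : Ω → Fin m) (hY : Measurable Y)
    (p : Fin m → ℝ) (hp : ∀ k, P {ω | Y ω = k} = ENNReal.ofReal (p k))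
    (hp0 : ∀ k, 0 ≤ p k) (g : Fin m → ℝ) :
    ∫ ω, g (Y ω) ∂P = ∑ k, p k * g k := by
  have hmap : ∫ ω, g (Y ω) ∂P = ∫ k, g k ∂(P.map Y) :=
    (integral_map hY.aemeasurable (by exact (measurable_of_countable g).aestronglyMeasurable)).symm
  have : IsProbabilityMeasure (P.map Y) := Measure.isProbabilityMeasure_map hY.aemeasurable
  rw [hmap, integral_fintype]
  refine Finset.sum_congr rfl fun k _ => ?_
  rw [measureReal_def, Measure.map_apply hY (measurableSet_singleton k)]
  have : Y ⁻¹' {k} = {ω | Y ω = k} := rfl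
  rw [this, hp k, ENNReal.toReal_ofReal (hp0 k), smul_eq_mul]
  exact .of_finite

set_option maxHeartbeats 2000000 in
/-- Average scoring rule under random misbehavior: each of `n` i.i.d. ratings on `{1,…,m}`
(encoded as `Fin m`, index `k` standing for value `k+1`) is distributed as the mixture
`k ↦ f/m + (1-f)α_k` (fraction `f` uniform, remainder categorical `α` with mean `γ`).
The mixed mean equals `(1-f)γ + f(m+1)/2`, and if `n ≥ (3/ε²)ln(2m/δ)` then with
probability at least `1 - δ` the empirical average `r̂` satisfies
`|r̂ - γ| ≤ ε√(m((1-f)γ + f(m+1)/2)) + mε² + f|(m+1)/2 - γ|`. -/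
theorem average_scoring_random_misbehavior
    {Ω : Type*} [MeasurableSpace Ω] (P : Measure Ω) [IsProbabilityMeasure P]
    (m n : ℕ) (hm : 0 < m) (hn0 : 0 < n) (α : Fin m → ℝ) (r : Fin n → Ω → Fin m)
    (hmeas : ∀ j, Measurable (r j))
    (hindep : iIndepFun r P)
    (f : ℝ) (hf0 : 0 ≤ f) (hf1 : f ≤ 1)
    (hdist : ∀ j k, P {ω | r j ω = k} = ENNReal.ofReal (f / m + (1 - f) * α k))
    (hα_nonneg : ∀ k, 0 ≤ α k) (hα_sum : ∑ k, α k = 1)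
    (γ : ℝ) (hγ : γ = ∑ k : Fin m, ((k : ℕ) + 1 : ℝ) * α k)
    (ε δ : ℝ) (hε : 0 < ε) (hδ0 : 0 < δ) (hδ1 : δ < 1)
    (hn : 3 / ε ^ 2 * Real.log (2 * m / δ) ≤ (n : ℝ)) :
    (∑ k : Fin m, ((k : ℕ) + 1 : ℝ) * (f / m + (1 - f) * α k) =
        (1 - f) * γ + f * (m + 1) / 2) ∧
    1 - δ ≤ (P {ω |
      |(∑ j, ((r j ω : ℕ) + 1 : ℝ)) / n - γ| ≤
        ε * Real.sqrt (m * ((1 - f) * γ + f * (m + 1) / 2)) + m * ε ^ 2 +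
          f * |(m + 1 : ℝ) / 2 - γ|}).toReal := by
  have hm' : (0:ℝ) < m := by exact_mod_cast hm
  have hm1 : (1:ℝ) ≤ m := by exact_mod_cast hm
  have hn' : (0:ℝ) < n := by exact_mod_cast hn0
  set p : Fin m → ℝ := fun k => f / m + (1 - f) * α k with hp_def
  have hp0 : ∀ k, 0 ≤ p k := fun k => by
    have := hα_nonneg k
    have : (0:ℝ) ≤ (1 - f) * α k := mul_nonneg (by linarith) this
    have hfm : (0:ℝ) ≤ f / m := div_nonneg hf0 hm'.le
    simp only [hp_def]; linarith
  have hpsum : ∑ k, p k = 1 := by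
    simp only [hp_def]
    rw [Finset.sum_add_distrib, Finset.sum_const, ← Finset.mul_sum, hα_sum,
      Finset.card_univ, Fintype.card_fin]
    rw [nsmul_eq_mul]
    field_simp
    ring
  set μb : ℝ := (1 - f) * γ + f * (m + 1) / 2 with hμb_def
  clear_value μb
  -- Part 1
  have h1 : ∑ k : Fin m, ((k : ℕ) + 1 : ℝ) * (f / m + (1 - f) * α k) = μb := by
    have hsplit : ∑ k : Fin m, ((k : ℕ) + 1 : ℝ) * (f / m + (1 - f) * α k)
        = (f / m) * (∑ k : Fin m, ((k : ℕ) + 1 : ℝ))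
          + (1 - f) * ∑ k : Fin m, ((k : ℕ) + 1 : ℝ) * α k := by
      rw [Finset.mul_sum, Finset.mul_sum, ← Finset.sum_add_distrib]
      exact Finset.sum_congr rfl fun k _ => by ring
    rw [hsplit, asrm_gauss, ← hγ, hμb_def]
    field_simp
    ring
  refine ⟨h1, ?_⟩
  have hμsum : ∑ k, p k * ((k : ℕ) + 1 : ℝ) = μb := by
    rw [← h1]; exact Finset.sum_congr rfl fun k _ => by rw [hp_def]; ring
  have hμb1 : 1 ≤ μb := by
    rw [← hμsum, ← hpsum]
    refine Finset.sum_le_sum fun k _ => ?_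
    have hk0 : (0:ℝ) ≤ ((k : ℕ) : ℝ) := Nat.cast_nonneg _
    nlinarith [hp0 k]
  have hμb0 : 0 < μb := by linarith
  have hmμ : 0 < (m:ℝ) * μb := mul_pos hm' hμb0
  set t : ℝ := ε * Real.sqrt (m * μb) + m * ε ^ 2 with ht_def
  clear_value t
  have hsqrt0 : 0 ≤ Real.sqrt ((m:ℝ) * μb) := Real.sqrt_nonneg _
  have ht0 : 0 < t := by
    have : 0 < (m:ℝ) * ε ^ 2 := by positivity
    have : 0 ≤ ε * Real.sqrt ((m:ℝ) * μb) := by positivity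
    rw [ht_def]; linarith
  have htsq : ε ^ 2 * ((m:ℝ) * μb) ≤ t ^ 2 := by
    have h2 : ε * Real.sqrt ((m:ℝ) * μb) ≤ t := by
      have : 0 < (m:ℝ) * ε ^ 2 := by positivity
      rw [ht_def]; linarith
    calc ε ^ 2 * ((m:ℝ) * μb) = (ε * Real.sqrt ((m:ℝ) * μb)) ^ 2 := by
          rw [mul_pow, Real.sq_sqrt hmμ.le]
      _ ≤ t ^ 2 := by
          refine pow_le_pow_left₀ (by positivity) h2 2
  have htm : (m:ℝ) * ε ^ 2 ≤ t := by
    have : 0 ≤ ε * Real.sqrt ((m:ℝ) * μb) := by positivity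
    rw [ht_def]; linarith
  -- random variables
  set X : Fin n → Ω → ℝ := fun j ω => ((r j ω : ℕ) + 1 : ℝ) with hX_def
  have hXmeas : ∀ j, Measurable (X j) := fun j =>
    (measurable_of_countable (fun k : Fin m => ((k : ℕ) + 1 : ℝ))).comp (hmeas j)
  have hX1 : ∀ j ω, 1 ≤ X j ω := fun j ω => by
    have : (0:ℝ) ≤ ((r j ω : ℕ) : ℝ) := Nat.cast_nonneg _
    simp only [hX_def]; linarith
  have hXm : ∀ j ω, X j ω ≤ m := fun j ω => by
    have : (r j ω : ℕ) + 1 ≤ m := (r j ω).isLt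
    simp only [hX_def]; exact_mod_cast this
  have hindepX : iIndepFun X P :=
    hindep.comp (fun _ (k : Fin m) => ((k : ℕ) + 1 : ℝ))
      (fun _ => measurable_of_countable _)
  have hint : ∀ (s : ℝ) j, Integrable (fun ω => Real.exp (s * X j ω)) P := by
    intro s j
    refine Integrable.mono' (integrable_const (Real.exp (|s| * m)))
      (((hXmeas j).const_mul s).exp.aestronglyMeasurable) (ae_of_all _ fun ω => ?_)
    rw [Real.norm_eq_abs, abs_of_nonneg (Real.exp_pos _).le]
    refine Real.exp_le_exp.2 ?_
    calc s * X j ω ≤ |s * X j ω| := le_abs_self _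
      _ = |s| * X j ω := by rw [abs_mul, abs_of_nonneg (le_trans zero_le_one (hX1 j ω))]
      _ ≤ |s| * m := mul_le_mul_of_nonneg_left (hXm j ω) (abs_nonneg s)
  have hmgf_j : ∀ (s : ℝ) j, mgf (X j) P s = ∑ k, p k * Real.exp (s * ((k : ℕ) + 1 : ℝ)) := by
    intro s j
    refine asrm_integral_comp P (r j) (hmeas j) p (fun k => ?_) hp0
      (fun k => Real.exp (s * ((k : ℕ) + 1 : ℝ)))
    simp only [hp_def]
    exact hdist j k
  have hmgf_le : ∀ (s : ℝ), |s| * m ≤ 1 → ∀ j,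
      mgf (X j) P s ≤ Real.exp (s * μb + 3/4 * s ^ 2 * ((m:ℝ) * μb)) := by
    intro s hs j
    rw [hmgf_j s j]
    have hstep : ∑ k, p k * Real.exp (s * ((k : ℕ) + 1 : ℝ))
        ≤ ∑ k : Fin m, p k * (1 + s * ((k : ℕ) + 1 : ℝ)
            + 3/4 * s ^ 2 * (m * ((k : ℕ) + 1 : ℝ))) := by
      refine Finset.sum_le_sum fun k _ => mul_le_mul_of_nonneg_left ?_ (hp0 k)
      have hk0 : (0:ℝ) ≤ ((k : ℕ) + 1 : ℝ) := by
        have : (0:ℝ) ≤ ((k : ℕ) : ℝ) := Nat.cast_nonneg _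
        linarith
      have hkm : ((k : ℕ) + 1 : ℝ) ≤ m := by exact_mod_cast k.isLt
      have habs : |s * ((k : ℕ) + 1 : ℝ)| ≤ 1 := by
        rw [abs_mul, abs_of_nonneg hk0]
        calc |s| * ((k : ℕ) + 1 : ℝ) ≤ |s| * m :=
              mul_le_mul_of_nonneg_left hkm (abs_nonneg s)
          _ ≤ 1 := hs
      refine (asrm_exp_bound habs).trans ?_
      have h2 : ((k : ℕ) + 1 : ℝ) * ((k : ℕ) + 1 : ℝ) ≤ (m:ℝ) * ((k : ℕ) + 1 : ℝ) :=
        mul_le_mul_of_nonneg_right hkm hk0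
      have h3 : (s * ((k : ℕ) + 1 : ℝ)) ^ 2 ≤ s ^ 2 * ((m:ℝ) * ((k : ℕ) + 1 : ℝ)) := by
        have h4 := mul_le_mul_of_nonneg_left h2 (sq_nonneg s)
        calc (s * ((k : ℕ) + 1 : ℝ)) ^ 2
            = s ^ 2 * (((k : ℕ) + 1 : ℝ) * ((k : ℕ) + 1 : ℝ)) := by ring
          _ ≤ s ^ 2 * ((m:ℝ) * ((k : ℕ) + 1 : ℝ)) := h4
      linarith
    refine hstep.trans ?_
    have hsum : ∑ k : Fin m, p k * (1 + s * ((k : ℕ) + 1 : ℝ)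
            + 3/4 * s ^ 2 * (m * ((k : ℕ) + 1 : ℝ)))
        = (∑ k, p k) + s * (∑ k, p k * ((k : ℕ) + 1 : ℝ))
          + 3/4 * s ^ 2 * (m:ℝ) * (∑ k, p k * ((k : ℕ) + 1 : ℝ)) := by
      rw [Finset.mul_sum, Finset.mul_sum, ← Finset.sum_add_distrib, ← Finset.sum_add_distrib]
      exact Finset.sum_congr rfl fun k _ => by ring
    rw [hsum, hpsum, hμsum]
    have := Real.add_one_le_exp (s * μb + 3/4 * s ^ 2 * ((m:ℝ) * μb))
    linarith
  -- mgf of the sum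
  have hS_int : ∀ (s : ℝ), Integrable (fun ω => Real.exp (s * ∑ j, X j ω)) P := by
    intro s
    have := hindepX.integrable_exp_mul_sum (t := s) hXmeas
      (s := Finset.univ) (fun j _ => hint s j)
    simpa [Finset.sum_apply] using this
  have hmgfS : ∀ (s : ℝ), |s| * m ≤ 1 →
      mgf (fun ω => ∑ j, X j ω) P s ≤ Real.exp ((n:ℝ) * (s * μb + 3/4 * s ^ 2 * ((m:ℝ) * μb))) := by
    intro s hs
    have heq : (fun ω => ∑ j, X j ω) = ∑ j : Fin n, X j := by
      funext ω; simp [Finset.sum_apply]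
    rw [heq, hindepX.mgf_sum hXmeas Finset.univ]
    calc ∏ j : Fin n, mgf (X j) P s
        ≤ ∏ _j : Fin n, Real.exp (s * μb + 3/4 * s ^ 2 * ((m:ℝ) * μb)) :=
          Finset.prod_le_prod (fun _ _ => mgf_nonneg) (fun j _ => hmgf_le s hs j)
      _ = Real.exp (s * μb + 3/4 * s ^ 2 * ((m:ℝ) * μb)) ^ n := by
          rw [Finset.prod_const, Finset.card_univ, Fintype.card_fin]
      _ = Real.exp ((n:ℝ) * (s * μb + 3/4 * s ^ 2 * ((m:ℝ) * μb))) := by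
          rw [← Real.exp_nat_mul]
  -- numeric: exp(-n ε²/3) ≤ δ/2
  have hexp : Real.exp (-((n:ℝ) * ε ^ 2 / 3)) ≤ δ / 2 := by
    have hx : (0:ℝ) < 2 * m / δ := by positivity
    have hL : Real.log (2 * m / δ) ≤ (n:ℝ) * ε ^ 2 / 3 := by
      have h2 := mul_le_mul_of_nonneg_right hn (by positivity : (0:ℝ) ≤ ε ^ 2 / 3)
      have h3 : 3 / ε ^ 2 * Real.log (2 * m / δ) * (ε ^ 2 / 3) = Real.log (2 * m / δ) := by
        field_simp
      rw [h3] at h2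
      linarith [h2]
    calc Real.exp (-((n:ℝ) * ε ^ 2 / 3)) ≤ Real.exp (-Real.log (2 * m / δ)) :=
          Real.exp_le_exp.2 (by linarith)
      _ = δ / (2 * m) := by rw [Real.exp_neg, Real.exp_log hx, inv_div]
      _ ≤ δ / 2 := by
          apply div_le_div_of_nonneg_left hδ0.le (by norm_num) (by linarith)
  -- upper tail
  have hupper : (P {ω | (n:ℝ) * (μb + t) ≤ ∑ j, X j ω}).toReal ≤ δ / 2 := by
    by_cases hcase : t ≤ 3/2 * μb
    · set s : ℝ := 2 * t / (3 * ((m:ℝ) * μb)) with hs_def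
      have hden : (0:ℝ) < 3 * ((m:ℝ) * μb) := by linarith
      have hs3 : s * (3 * ((m:ℝ) * μb)) = 2 * t := by
        rw [hs_def]; exact div_mul_cancel₀ _ hden.ne'
      clear_value s
      have hs0 : 0 ≤ s := by nlinarith [hs3, ht0.le, hden]
      have hsmu : s * ((m:ℝ) * μb) = 2 * t / 3 := by linear_combination (1/3) * hs3
      have hsm : |s| * m ≤ 1 := by
        rw [abs_of_nonneg hs0]
        nlinarith [hs3, mul_le_mul_of_nonneg_right hcase hm'.le, hμb0, hm']
      have hs2 : s ^ 2 * ((m:ℝ) * μb) = s * (2 * t / 3) := by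
        linear_combination s * hsmu
      have hst : 2/3 * ε ^ 2 ≤ s * t := by
        have hst_eq : s * t * (3 * ((m:ℝ) * μb)) = 2 * t ^ 2 := by
          linear_combination t * hs3
        rw [← sub_nonneg]
        have h10 : 0 ≤ 3 * ((m:ℝ) * μb) * (s * t - 2/3 * ε ^ 2) := by
          have heq : 3 * ((m:ℝ) * μb) * (s * t - 2/3 * ε ^ 2)
              = 2 * t ^ 2 - 2 * (ε ^ 2 * ((m:ℝ) * μb)) := by
            linear_combination hst_eq
          rw [heq]; linarith [htsq]
        exact nonneg_of_mul_nonneg_right h10 hden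
      calc (P {ω | (n:ℝ) * (μb + t) ≤ ∑ j, X j ω}).toReal
          ≤ Real.exp (-s * ((n:ℝ) * (μb + t))) * mgf (fun ω => ∑ j, X j ω) P s :=
            measure_ge_le_exp_mul_mgf _ hs0 (hS_int s)
        _ ≤ Real.exp (-s * ((n:ℝ) * (μb + t)))
              * Real.exp ((n:ℝ) * (s * μb + 3/4 * s ^ 2 * ((m:ℝ) * μb))) := by
            exact mul_le_mul_of_nonneg_left (hmgfS s hsm) (Real.exp_pos _).le
        _ = Real.exp (-s * ((n:ℝ) * (μb + t))
              + (n:ℝ) * (s * μb + 3/4 * s ^ 2 * ((m:ℝ) * μb))) := (Real.exp_add _ _).symm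
        _ ≤ Real.exp (-((n:ℝ) * ε ^ 2 / 3)) := by
            refine Real.exp_le_exp.2 ?_
            have hE : -s * ((n:ℝ) * (μb + t)) + (n:ℝ) * (s * μb + 3/4 * s ^ 2 * ((m:ℝ) * μb))
                = -((n:ℝ) * (s * t) / 2) := by linear_combination 3/4 * (n:ℝ) * hs2
            rw [hE]
            have : (2:ℝ)/3 * ε ^ 2 * (n:ℝ) ≤ s * t * (n:ℝ) :=
              mul_le_mul_of_nonneg_right hst hn'.le
            linarith
        _ ≤ δ / 2 := hexp
    · push_neg at hcase
      set s : ℝ := 1 / (m:ℝ) with hs_def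
      have hs0 : 0 ≤ s := by rw [hs_def]; positivity
      have hsm1 : s * (m:ℝ) = 1 := by
        rw [hs_def]; exact one_div_mul_cancel hm'.ne'
      clear_value s
      have hsm : |s| * m ≤ 1 := by rw [abs_of_nonneg hs0, hsm1]
      have hs2 : s ^ 2 * ((m:ℝ) * μb) = s * μb := by
        calc s ^ 2 * ((m:ℝ) * μb) = (s * (m:ℝ)) * (s * μb) := by ring
          _ = s * μb := by rw [hsm1, one_mul]
      calc (P {ω | (n:ℝ) * (μb + t) ≤ ∑ j, X j ω}).toReal
          ≤ Real.exp (-s * ((n:ℝ) * (μb + t))) * mgf (fun ω => ∑ j, X j ω) P s :=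
            measure_ge_le_exp_mul_mgf _ hs0 (hS_int s)
        _ ≤ Real.exp (-s * ((n:ℝ) * (μb + t)))
              * Real.exp ((n:ℝ) * (s * μb + 3/4 * s ^ 2 * ((m:ℝ) * μb))) := by
            exact mul_le_mul_of_nonneg_left (hmgfS s hsm) (Real.exp_pos _).le
        _ = Real.exp (-s * ((n:ℝ) * (μb + t))
              + (n:ℝ) * (s * μb + 3/4 * s ^ 2 * ((m:ℝ) * μb))) := (Real.exp_add _ _).symm
        _ ≤ Real.exp (-((n:ℝ) * ε ^ 2 / 3)) := by
            refine Real.exp_le_exp.2 ?_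
            have hE : -s * ((n:ℝ) * (μb + t)) + (n:ℝ) * (s * μb + 3/4 * s ^ 2 * ((m:ℝ) * μb))
                = (n:ℝ) * s * (3/4 * μb - t) := by linear_combination 3/4 * (n:ℝ) * hs2
            rw [hE]
            -- n*s*(3/4 μb - t) ≤ -(n ε²/3)
            have h34 : 3/4 * μb - t ≤ -(t/2) := by linarith
            have hns : 0 ≤ (n:ℝ) * s := by positivity
            have h5 : (n:ℝ) * s * (3/4 * μb - t) ≤ (n:ℝ) * s * (-(t/2)) :=
              mul_le_mul_of_nonneg_left h34 hns
            have h6 : (n:ℝ) * s * (-(t/2)) ≤ (n:ℝ) * s * (-((m:ℝ) * ε ^ 2 / 2)) := by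
              refine mul_le_mul_of_nonneg_left (by linarith) hns
            have h7 : (n:ℝ) * s * (-((m:ℝ) * ε ^ 2 / 2)) = -((n:ℝ) * ε ^ 2 / 2) := by
              have : (n:ℝ) * s * (-((m:ℝ) * ε ^ 2 / 2))
                  = -((n:ℝ) * ε ^ 2 / 2) * (s * (m:ℝ)) := by ring
              rw [this, hsm1, mul_one]
            have h8 : -((n:ℝ) * ε ^ 2 / 2) ≤ -((n:ℝ) * ε ^ 2 / 3) := by
              have : (0:ℝ) ≤ (n:ℝ) * ε ^ 2 := by positivity
              linarith
            linarith
        _ ≤ δ / 2 := hexp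
  -- lower tail
  have hlower : (P {ω | ∑ j, X j ω ≤ (n:ℝ) * (μb - t)}).toReal ≤ δ / 2 := by
    by_cases hcase : t ≤ 3/2 * μb
    · set s : ℝ := -(2 * t / (3 * ((m:ℝ) * μb))) with hs_def
      have hden : (0:ℝ) < 3 * ((m:ℝ) * μb) := by linarith
      have hs3 : s * (3 * ((m:ℝ) * μb)) = -(2 * t) := by
        rw [hs_def, neg_mul, div_mul_cancel₀ _ hden.ne']
      clear_value s
      have hs0 : s ≤ 0 := by nlinarith [hs3, ht0.le, hden]
      have hsmu : s * ((m:ℝ) * μb) = -(2 * t / 3) := by linear_combination (1/3) * hs3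
      have hsm : |s| * m ≤ 1 := by
        rw [abs_of_nonpos hs0]
        nlinarith [hs3, mul_le_mul_of_nonneg_right hcase hm'.le, hμb0, hm']
      have hs2 : s ^ 2 * ((m:ℝ) * μb) = s * (-(2 * t / 3)) := by
        linear_combination s * hsmu
      have hst : 2/3 * ε ^ 2 ≤ -(s * t) := by
        have hst_eq : -(s * t) * (3 * ((m:ℝ) * μb)) = 2 * t ^ 2 := by
          linear_combination (-t) * hs3
        rw [← sub_nonneg]
        have h10 : 0 ≤ 3 * ((m:ℝ) * μb) * (-(s * t) - 2/3 * ε ^ 2) := by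
          have heq : 3 * ((m:ℝ) * μb) * (-(s * t) - 2/3 * ε ^ 2)
              = 2 * t ^ 2 - 2 * (ε ^ 2 * ((m:ℝ) * μb)) := by
            linear_combination hst_eq
          rw [heq]; linarith [htsq]
        exact nonneg_of_mul_nonneg_right h10 hden
      calc (P {ω | ∑ j, X j ω ≤ (n:ℝ) * (μb - t)}).toReal
          ≤ Real.exp (-s * ((n:ℝ) * (μb - t))) * mgf (fun ω => ∑ j, X j ω) P s :=
            measure_le_le_exp_mul_mgf _ hs0 (hS_int s)
        _ ≤ Real.exp (-s * ((n:ℝ) * (μb - t)))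
              * Real.exp ((n:ℝ) * (s * μb + 3/4 * s ^ 2 * ((m:ℝ) * μb))) := by
            exact mul_le_mul_of_nonneg_left (hmgfS s hsm) (Real.exp_pos _).le
        _ = Real.exp (-s * ((n:ℝ) * (μb - t))
              + (n:ℝ) * (s * μb + 3/4 * s ^ 2 * ((m:ℝ) * μb))) := (Real.exp_add _ _).symm
        _ ≤ Real.exp (-((n:ℝ) * ε ^ 2 / 3)) := by
            refine Real.exp_le_exp.2 ?_
            have hE : -s * ((n:ℝ) * (μb - t)) + (n:ℝ) * (s * μb + 3/4 * s ^ 2 * ((m:ℝ) * μb))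
                = (n:ℝ) * (s * t) / 2 := by linear_combination 3/4 * (n:ℝ) * hs2
            rw [hE]
            have h9 : (2:ℝ)/3 * ε ^ 2 * (n:ℝ) ≤ -(s * t) * (n:ℝ) :=
              mul_le_mul_of_nonneg_right hst hn'.le
            linarith
        _ ≤ δ / 2 := hexp
    · have hempty : {ω | ∑ j, X j ω ≤ (n:ℝ) * (μb - t)} = ∅ := by
        push_neg at hcase
        refine Set.eq_empty_iff_forall_notMem.2 fun ω hω => ?_
        simp only [Set.mem_setOf_eq] at hω
        have hge : (n:ℝ) ≤ ∑ j, X j ω := by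
          calc (n:ℝ) = ∑ _j : Fin n, (1:ℝ) := by
                rw [Finset.sum_const, Finset.card_univ, Fintype.card_fin, nsmul_eq_mul, mul_one]
            _ ≤ ∑ j, X j ω := Finset.sum_le_sum fun j _ => hX1 j ω
        have hneg : μb - t < 0 := by linarith
        have : (n:ℝ) * (μb - t) < 0 := mul_neg_of_pos_of_neg hn' hneg
        linarith
      rw [hempty]
      simp only [measure_empty, ENNReal.toReal_zero]
      linarith
  -- assembly
  set C : ℝ := t + f * |((m:ℝ) + 1) / 2 - γ| with hC_def
  set E : Set Ω := {ω | |(∑ j, X j ω) / n - μb| ≤ t} with hE_def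
  set A : Set Ω := {ω | (n:ℝ) * (μb + t) ≤ ∑ j, X j ω} with hA_def
  set B : Set Ω := {ω | ∑ j, X j ω ≤ (n:ℝ) * (μb - t)} with hB_def
  set T : Set Ω := {ω | |(∑ j, X j ω) / n - γ| ≤ C} with hT_def
  have hsubT : E ⊆ T := by
    intro ω hω
    simp only [hE_def, Set.mem_setOf_eq] at hω
    simp only [hT_def, Set.mem_setOf_eq]
    have h2 : |(∑ j, X j ω) / n - γ| ≤ |(∑ j, X j ω) / n - μb| + |μb - γ| :=
      abs_sub_le _ _ _
    have h3 : |μb - γ| = f * |((m:ℝ) + 1) / 2 - γ| := by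
      have h4 : μb - γ = f * (((m:ℝ) + 1) / 2 - γ) := by rw [hμb_def]; ring
      rw [h4, abs_mul, abs_of_nonneg hf0]
    rw [hC_def]
    linarith
  have hcompl : Eᶜ ⊆ A ∪ B := by
    intro ω hω
    simp only [hE_def, Set.mem_compl_iff, Set.mem_setOf_eq, not_le] at hω
    simp only [hA_def, hB_def, Set.mem_union, Set.mem_setOf_eq]
    rcases lt_abs.mp hω with h | h
    · left
      have : μb + t ≤ (∑ j, X j ω) / n := by linarith
      calc (n:ℝ) * (μb + t) ≤ (n:ℝ) * ((∑ j, X j ω) / n) :=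
            mul_le_mul_of_nonneg_left this hn'.le
        _ = ∑ j, X j ω := by field_simp
    · right
      have : (∑ j, X j ω) / n ≤ μb - t := by linarith
      calc ∑ j, X j ω = (n:ℝ) * ((∑ j, X j ω) / n) := by field_simp
        _ ≤ (n:ℝ) * (μb - t) := mul_le_mul_of_nonneg_left this hn'.le
  have hunion : (1:ENNReal) ≤ P E + (P A + P B) := by
    calc (1:ENNReal) = P Set.univ := measure_univ.symm
      _ = P (E ∪ Eᶜ) := by rw [Set.union_compl_self]
      _ ≤ P E + P Eᶜ := measure_union_le _ _
      _ ≤ P E + (P A + P B) :=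
          add_le_add le_rfl ((measure_mono hcompl).trans (measure_union_le _ _))
  have hsum_fin : P E + (P A + P B) ≠ ⊤ := by finiteness
  have hreal : (1:ℝ) ≤ (P E).toReal + ((P A).toReal + (P B).toReal) := by
    have h5 := ENNReal.toReal_mono hsum_fin hunion
    rw [ENNReal.toReal_add (measure_ne_top P E) (by finiteness),
      ENNReal.toReal_add (measure_ne_top P A) (measure_ne_top P B)] at h5
    simpa using h5
  have hE_ge : 1 - δ ≤ (P E).toReal := by
    have hA_le : (P A).toReal ≤ δ / 2 := hupper
    have hB_le : (P B).toReal ≤ δ / 2 := hlower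
    linarith
  have hT_ge : (P E).toReal ≤ (P T).toReal :=
    ENNReal.toReal_mono (measure_ne_top P T) (measure_mono hsubT)
  have hfinal : 1 - δ ≤ (P T).toReal := hE_ge.trans hT_ge
  exact hfinal
end
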